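/- With F, p_k, ‖·‖_k as defined, if a sequence φ_j ∈ F is Cauchy with respect to all seminorms ‖·‖_k and p_k, then there is φ ∈ F with φ_j → φ in all these seminorms. -/

import Mathlib

open Filter Set

/-- sup_{s ∈ [0, kτ₁]} |b_i φ(s − τ_i)|  (τ₁ = τ 0 with ℕ-indexing). -/
noncomputable def pTerm (b τ : ℕ → ℝ) (φ : ℝ → ℝ) (k i : ℕ) : ℝ :=
  ⨆ s : Set.Icc (0:ℝ) ((k : ℝ) * τ 0), |b i * φ ((s : ℝ) - τ i)|

/-- The seminorm p_k(φ) = Σ_{i ≥ n(k)} sup_{s ∈ [0,kτ₁]} |b_i φ(s − τ_i)|. -/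
noncomputable def pSemi (b τ : ℕ → ℝ) (n : ℕ → ℕ) (φ : ℝ → ℝ) (k : ℕ) : ℝ :=
  ∑' i : ℕ, pTerm b τ φ k (n k + i)

/-- The seminorm ‖φ‖_k = sup_{θ ∈ [−k,0]} |φ(θ)|. -/
noncomputable def normSemi (φ : ℝ → ℝ) (k : ℕ) : ℝ :=
  ⨆ θ : Set.Icc (-(k:ℝ)) (0:ℝ), |φ (θ : ℝ)|

/-- n(k) is the smallest natural number such that τ_i ≥ kτ₁ for all i ≥ n(k). -/
def nSpec (τ : ℕ → ℝ) (n : ℕ → ℕ) : Prop :=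
  ∀ k : ℕ, (∀ i, n k ≤ i → (k : ℝ) * τ 0 ≤ τ i) ∧
    ∀ m : ℕ, (∀ i, m ≤ i → (k : ℝ) * τ 0 ≤ τ i) → n k ≤ m

/-- Membership in the Fréchet space F: φ is continuous on (-∞,0] and
p_k(φ) < ∞ (i.e. the defining series is summable) for every k. -/
def memF (b τ : ℕ → ℝ) (n : ℕ → ℕ) (φ : ℝ → ℝ) : Prop :=
  ContinuousOn φ (Set.Iic 0) ∧
    ∀ k : ℕ, Summable fun i => pTerm b τ φ k (n k + i)

/-!
The seminorms `‖·‖_k` make `φ_j` uniformly Cauchy on every `[-K, 0]`, so `φ_j` converges locally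
uniformly on `(-∞, 0]` to a continuous `ψ`, and `‖φ_j - ψ‖_k → 0`. Each term of the series `p_k`
only sees its argument on a compact interval `[-τ_i, 0]`, so the `i`-th term of `p_k(φ_j - ψ)` is
at most that of `p_k(φ_j - φ_j')` plus a quantity tending to `0` as `j' → ∞`. Passing to the limit
in the partial sums (a Fatou argument) turns the Cauchy bound `p_k(φ_j - φ_j') ≤ ε` into
`p_k(φ_j - ψ) ≤ ε`; in particular `p_k(ψ) ≤ p_k(φ_j) + p_k(φ_j - ψ) < ∞`.
-/

open Topology

section SupAbs

variable {α : Type*}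

lemma bddAbove_range_abs_of_continuousOn [TopologicalSpace α] {S : Set α} {f : α → ℝ}
    (hS : IsCompact S) (hf : ContinuousOn f S) : BddAbove (range fun x : S => |f x|) := by
  obtain ⟨C, hC⟩ := hS.exists_bound_of_continuousOn hf
  exact ⟨C, by rintro _ ⟨x, rfl⟩; exact hC x x.2⟩

lemma iSup_abs_le_add {S : Set α} {f g h : α → ℝ}
    (hg : BddAbove (range fun x : S => |g x|)) (hh : BddAbove (range fun x : S => |h x|))
    (hfgh : ∀ x ∈ S, |f x| ≤ |g x| + |h x|) :
    ⨆ x : S, |f x| ≤ (⨆ x : S, |g x|) + ⨆ x : S, |h x| :=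
  Real.iSup_le (fun x => (hfgh x x.2).trans (add_le_add (le_ciSup hg x) (le_ciSup hh x)))
    (add_nonneg (Real.iSup_nonneg fun _ => abs_nonneg _) (Real.iSup_nonneg fun _ => abs_nonneg _))

lemma tendsto_iSup_abs_sub_of_tendstoUniformlyOn {ι : Type*} {p : Filter ι} {S : Set α}
    {F : ι → α → ℝ} {f : α → ℝ} (hF : TendstoUniformlyOn F f p S) :
    Tendsto (fun j => ⨆ x : S, |F j x - f x|) p (𝓝 0) := by
  refine Metric.tendsto_nhds.2 fun ε hε => ?_
  filter_upwards [Metric.tendstoUniformlyOn_iff.1 hF (ε / 2) (half_pos hε)] with j hj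
  rw [Real.dist_0_eq_abs, abs_of_nonneg (Real.iSup_nonneg fun _ => abs_nonneg _)]
  refine (Real.iSup_le (fun x => ?_) (half_pos hε).le).trans_lt (half_lt_self hε)
  rw [abs_sub_comm]
  exact (hj x x.2).le

end SupAbs

lemma UniformCauchySeqOn.tendstoUniformlyOn_limUnder {α β : Type*} [UniformSpace β]
    [CompleteSpace β] [Nonempty β] {F : ℕ → α → β} {S : Set α}
    (hF : UniformCauchySeqOn F atTop S) :
    TendstoUniformlyOn F (fun x => limUnder atTop fun j => F j x) atTop S :=
  hF.tendstoUniformlyOn_of_tendsto fun _ hx => (hF.cauchySeq hx).tendsto_limUnder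

lemma continuousOn_Iic_of_forall_Icc {β : Type*} [TopologicalSpace β] {f : ℝ → β}
    (hf : ∀ K : ℕ, ContinuousOn f (Icc (-(K : ℝ)) 0)) : ContinuousOn f (Iic 0) := by
  refine continuousOn_of_locally_continuousOn fun x _ => ?_
  obtain ⟨K, hK⟩ := exists_nat_gt (-x)
  exact ⟨Ioi (-(K : ℝ)), isOpen_Ioi, neg_lt.1 hK, (hf K).mono fun y hy => ⟨hy.2.le, hy.1⟩⟩

lemma abs_le_normSemi {f : ℝ → ℝ} (hf : ContinuousOn f (Iic 0)) {k : ℕ} {x : ℝ}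
    (hx : x ∈ Icc (-(k : ℝ)) 0) : |f x| ≤ normSemi f k :=
  le_ciSup (bddAbove_range_abs_of_continuousOn isCompact_Icc (hf.mono Icc_subset_Iic_self))
    ⟨x, hx⟩

lemma uniformCauchySeqOn_Icc_of_normSemi {φ : ℕ → ℝ → ℝ} (hφ : ∀ j, ContinuousOn (φ j) (Iic 0))
    {K : ℕ} (h : ∀ ε > (0 : ℝ), ∃ N : ℕ, ∀ j ≥ N, ∀ j' ≥ N,
      normSemi (fun θ => φ j θ - φ j' θ) K ≤ ε) :
    UniformCauchySeqOn φ atTop (Icc (-(K : ℝ)) 0) := by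
  refine Metric.uniformCauchySeqOn_iff.2 fun ε hε => ?_
  obtain ⟨N, hN⟩ := h (ε / 2) (half_pos hε)
  refine ⟨N, fun j hj j' hj' x hx => ?_⟩
  rw [Real.dist_eq]
  exact ((abs_le_normSemi ((hφ j).sub (hφ j')) hx).trans (hN j hj j' hj')).trans_lt
    (half_lt_self hε)

section PTerm

variable {b τ : ℕ → ℝ} {k m : ℕ}

lemma pTerm_nonneg (f : ℝ → ℝ) : 0 ≤ pTerm b τ f k m :=
  Real.iSup_nonneg fun _ => abs_nonneg _

lemma pTerm_eq_abs_mul (f : ℝ → ℝ) :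
    pTerm b τ f k m = |b m| * ⨆ s : Icc (0 : ℝ) (k * τ 0), |f (s - τ m)| := by
  rw [Real.mul_iSup_of_nonneg (abs_nonneg _)]
  simp only [pTerm, abs_mul]

lemma bddAbove_range_abs_shift {g : ℝ → ℝ} (hg : ContinuousOn g (Iic 0)) {c t : ℝ}
    (hct : c ≤ t) : BddAbove (range fun s : Icc (0 : ℝ) c => |g (s - t)|) :=
  bddAbove_range_abs_of_continuousOn (f := fun s => g (s - t)) isCompact_Icc
    (hg.comp (continuousOn_id.sub continuousOn_const) fun s hs => by
      simp only [mem_Iic]; linarith [hs.2])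

lemma pTerm_le_add {f g h : ℝ → ℝ} (hg : ContinuousOn g (Iic 0)) (hh : ContinuousOn h (Iic 0))
    (hm : (k : ℝ) * τ 0 ≤ τ m) (hfgh : ∀ x ≤ 0, |f x| ≤ |g x| + |h x|) :
    pTerm b τ f k m ≤ pTerm b τ g k m + pTerm b τ h k m := by
  rw [pTerm_eq_abs_mul, pTerm_eq_abs_mul, pTerm_eq_abs_mul, ← mul_add]
  refine mul_le_mul_of_nonneg_left ?_ (abs_nonneg _)
  exact iSup_abs_le_add (f := fun s => f (s - τ m)) (bddAbove_range_abs_shift hg hm)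
    (bddAbove_range_abs_shift hh hm) fun s hs => hfgh _ (by linarith [hs.2])

lemma tendsto_pTerm_sub_zero {F : ℕ → ℝ → ℝ} {f : ℝ → ℝ}
    (hF : ∀ K : ℕ, TendstoUniformlyOn F f atTop (Icc (-(K : ℝ)) 0)) (hm : (k : ℝ) * τ 0 ≤ τ m) :
    Tendsto (fun j => pTerm b τ (fun x => F j x - f x) k m) atTop (𝓝 0) := by
  have hshift : Icc (0 : ℝ) (k * τ 0) ⊆ (· - τ m) ⁻¹' Icc (-(⌈τ m⌉₊ : ℝ)) 0 := fun s hs =>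
    ⟨by linarith [Nat.le_ceil (τ m), hs.1], by linarith [hs.2]⟩
  simpa only [pTerm_eq_abs_mul, Function.comp_apply, mul_zero] using
    (tendsto_iSup_abs_sub_of_tendstoUniformlyOn (((hF _).comp (· - τ m)).mono hshift)).const_mul
      |b m|

end PTerm

lemma summable_and_tsum_le_of_le_add {f r : ℕ → ℕ → ℝ} {g : ℕ → ℝ} {ε : ℝ}
    (hg : ∀ i, 0 ≤ g i) (hf : ∀ j i, 0 ≤ f j i) (hfs : ∀ j, Summable (f j))
    (hfε : ∀ᶠ j in atTop, ∑' i, f j i ≤ ε) (hr : ∀ i, Tendsto (fun j => r j i) atTop (𝓝 0))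
    (hgfr : ∀ j i, g i ≤ f j i + r j i) :
    Summable g ∧ ∑' i, g i ≤ ε := by
  have hpartial : ∀ M, ∑ i ∈ Finset.range M, g i ≤ ε := by
    intro M
    have hrM : Tendsto (fun j => ε + ∑ i ∈ Finset.range M, r j i) atTop (𝓝 ε) := by
      simpa using tendsto_const_nhds.add (tendsto_finsetSum _ fun i _ => hr i)
    refine ge_of_tendsto hrM ?_
    filter_upwards [hfε] with j hj
    calc ∑ i ∈ Finset.range M, g i
        ≤ ∑ i ∈ Finset.range M, f j i + ∑ i ∈ Finset.range M, r j i := by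
          rw [← Finset.sum_add_distrib]
          exact Finset.sum_le_sum fun i _ => hgfr j i
      _ ≤ ε + ∑ i ∈ Finset.range M, r j i :=
          add_le_add_left (((hfs j).sum_le_tsum _ fun i _ => hf j i).trans hj) _
  exact ⟨summable_of_sum_range_le hg hpartial, Real.tsum_le_of_sum_range_le hg hpartial⟩

section SpaceF

variable {b τ : ℕ → ℝ} {n : ℕ → ℕ}

lemma nSpec.le_tau_add (hn : nSpec τ n) (k i : ℕ) : (k : ℝ) * τ 0 ≤ τ (n k + i) :=
  (hn k).1 _ (Nat.le_add_right _ _)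

lemma pSemi_nonneg (f : ℝ → ℝ) (k : ℕ) : 0 ≤ pSemi b τ n f k :=
  tsum_nonneg fun _ => pTerm_nonneg f

lemma summable_pTerm_sub (hn : nSpec τ n) {f g : ℝ → ℝ} (hf : memF b τ n f) (hg : memF b τ n g)
    (k : ℕ) : Summable fun i => pTerm b τ (fun x => f x - g x) k (n k + i) :=
  Summable.of_nonneg_of_le (fun _ => pTerm_nonneg _)
    (fun i => pTerm_le_add hf.1 hg.1 (hn.le_tau_add k i) fun _ _ => abs_sub _ _)
    ((hf.2 k).add (hg.2 k))

lemma summable_pTerm_of_summable_pTerm_sub (hn : nSpec τ n) {f g : ℝ → ℝ} (hf : memF b τ n f)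
    (hg : ContinuousOn g (Iic 0)) {k : ℕ}
    (hfg : Summable fun i => pTerm b τ (fun x => f x - g x) k (n k + i)) :
    Summable fun i => pTerm b τ g k (n k + i) :=
  Summable.of_nonneg_of_le (fun _ => pTerm_nonneg _)
    (fun i => pTerm_le_add (h := fun x => f x - g x) hf.1 (hf.1.sub hg) (hn.le_tau_add k i)
      fun x _ => by linarith [abs_sub_abs_le_abs_sub (g x) (f x), abs_sub_comm (g x) (f x)])
    ((hf.2 k).add hfg)

lemma summable_and_pSemi_sub_le_of_tendstoUniformlyOn (hn : nSpec τ n) {φ : ℕ → ℝ → ℝ}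
    {ψ : ℝ → ℝ} (hφ : ∀ j, memF b τ n (φ j)) (hψ : ContinuousOn ψ (Iic 0))
    (hφψ : ∀ K : ℕ, TendstoUniformlyOn φ ψ atTop (Icc (-(K : ℝ)) 0)) {k N j : ℕ} {ε : ℝ}
    (hN : ∀ j' ≥ N, pSemi b τ n (fun θ => φ j θ - φ j' θ) k ≤ ε) :
    Summable (fun i => pTerm b τ (fun x => φ j x - ψ x) k (n k + i)) ∧
      pSemi b τ n (fun x => φ j x - ψ x) k ≤ ε :=
  summable_and_tsum_le_of_le_add (fun _ => pTerm_nonneg _) (fun _ _ => pTerm_nonneg _)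
    (fun j' => summable_pTerm_sub hn (hφ j) (hφ j') k) (eventually_atTop.2 ⟨N, hN⟩)
    (fun i => tendsto_pTerm_sub_zero hφψ (hn.le_tau_add k i))
    (fun j' i => pTerm_le_add ((hφ j).1.sub (hφ j').1) ((hφ j').1.sub hψ) (hn.le_tau_add k i)
      fun _ _ => abs_sub_le _ _ _)

end SpaceF

theorem cauchy_seq_in_F_converges_general (b τ : ℕ → ℝ) (n : ℕ → ℕ)
    (hn : nSpec τ n)
    (φ : ℕ → ℝ → ℝ) (hmem : ∀ j, memF b τ n (φ j))
    (hcauchyNorm : ∀ k : ℕ, ∀ ε > (0:ℝ), ∃ N : ℕ, ∀ j ≥ N, ∀ j' ≥ N,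
      normSemi (fun θ => φ j θ - φ j' θ) k ≤ ε)
    (hcauchyP : ∀ k : ℕ, ∀ ε > (0:ℝ), ∃ N : ℕ, ∀ j ≥ N, ∀ j' ≥ N,
      pSemi b τ n (fun θ => φ j θ - φ j' θ) k ≤ ε) :
    ∃ ψ : ℝ → ℝ, memF b τ n ψ ∧
      (∀ k : ℕ, Tendsto (fun j => normSemi (fun θ => φ j θ - ψ θ) k) atTop (nhds 0)) ∧
      (∀ k : ℕ, Tendsto (fun j => pSemi b τ n (fun θ => φ j θ - ψ θ) k) atTop (nhds 0)) := by
  set ψ : ℝ → ℝ := fun x => limUnder atTop fun j => φ j x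
  have hunif : ∀ K : ℕ, TendstoUniformlyOn φ ψ atTop (Icc (-(K : ℝ)) 0) := fun K =>
    (uniformCauchySeqOn_Icc_of_normSemi (fun j => (hmem j).1)
      (hcauchyNorm K)).tendstoUniformlyOn_limUnder
  have hψ : ContinuousOn ψ (Iic 0) := continuousOn_Iic_of_forall_Icc fun K =>
    (hunif K).continuousOn (Frequently.of_forall fun j => (hmem j).1.mono Icc_subset_Iic_self)
  have hp : ∀ k, ∀ ε > (0 : ℝ), ∀ᶠ j in atTop,
      Summable (fun i => pTerm b τ (fun x => φ j x - ψ x) k (n k + i)) ∧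
        pSemi b τ n (fun x => φ j x - ψ x) k ≤ ε := by
    intro k ε hε
    obtain ⟨N, hN⟩ := hcauchyP k ε hε
    exact eventually_atTop.2 ⟨N, fun j hj =>
      summable_and_pSemi_sub_le_of_tendstoUniformlyOn hn hmem hψ hunif (hN j hj)⟩
  refine ⟨ψ, ⟨hψ, fun k => ?_⟩, fun k => tendsto_iSup_abs_sub_of_tendstoUniformlyOn (hunif k),
    fun k => Metric.tendsto_nhds.2 fun ε hε => ?_⟩
  · obtain ⟨j, hj, -⟩ := (hp k 1 one_pos).exists
    exact summable_pTerm_of_summable_pTerm_sub hn (hmem j) hψ hj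
  · filter_upwards [hp k (ε / 2) (half_pos hε)] with j hj
    rw [Real.dist_0_eq_abs, abs_of_nonneg (pSemi_nonneg _ k)]
    linarith [hj.2]

/-- If a sequence φ_j ∈ F is Cauchy with respect to all the
seminorms ‖·‖_k and p_k, then there is φ ∈ F with φ_j → φ in all these
seminorms. -/
theorem cauchy_seq_in_F_converges (b τ : ℕ → ℝ) (n : ℕ → ℕ)
    (hτ : StrictMono τ) (hτpos : ∀ i, 0 < τ i)
    (hτtop : Tendsto τ atTop atTop) (hn : nSpec τ n)
    (φ : ℕ → ℝ → ℝ) (hmem : ∀ j, memF b τ n (φ j))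
    (hcauchyNorm : ∀ k : ℕ, ∀ ε > (0:ℝ), ∃ N : ℕ, ∀ j ≥ N, ∀ j' ≥ N,
      normSemi (fun θ => φ j θ - φ j' θ) k ≤ ε)
    (hcauchyP : ∀ k : ℕ, ∀ ε > (0:ℝ), ∃ N : ℕ, ∀ j ≥ N, ∀ j' ≥ N,
      pSemi b τ n (fun θ => φ j θ - φ j' θ) k ≤ ε) :
    ∃ ψ : ℝ → ℝ, memF b τ n ψ ∧
      (∀ k : ℕ, Tendsto (fun j => normSemi (fun θ => φ j θ - ψ θ) k) atTop (nhds 0)) ∧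
      (∀ k : ℕ, Tendsto (fun j => pSemi b τ n (fun θ => φ j θ - ψ θ) k) atTop (nhds 0)) :=
  cauchy_seq_in_F_converges_general b τ n hn φ hmem hcauchyNorm hcauchyP
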